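/- Let k ≥ 4 and let ψ(q) = q/φ(q). Then Σ_{1 ≤ q ≤ Q} φ(q)·(κ(q)·ψ(q))^{k+1} ≪_ε Q^ε for every ε > 0, uniformly in Q ≥ 1. -/

import Mathlib

/-!
The summand `f q = φ(q) (κ(q) ψ(q)) ^ (k + 1)` is multiplicative. Rankin's trick: since
`(Q / q) ^ ε ≥ 1` for `q ≤ Q`, the sum is at most `Q ^ ε` times the sum of the multiplicative
function `|f q| * q ^ (-ε)` over `Q`-smooth `q`, which is the Euler product
`∏_{p ≤ Q} ∑_e |f (p ^ e)| * p ^ (-e ε)`. Every prime power term of `f` is `O(1 / p)`, because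
`ψ(p ^ e) ≤ 2` and `κ(p ^ e) ^ (k + 1) * p ^ e ≤ k ^ (k + 1) / p`; hence each local factor is
`1 + O(p ^ (-1 - ε))`, and the product is at most `exp (O(ζ(1 + ε)))` uniformly in `Q`.
-/

open Real Finset

theorem sum_Icc_le_prod_primesBelow_tsum {g : ℕ → ℝ} (hg : ∀ n, 0 ≤ g n) (h1 : g 1 = 1)
    (hmul : ∀ {m n : ℕ}, m.Coprime n → g (m * n) = g m * g n)
    (hsum : ∀ {p : ℕ}, p.Prime → Summable fun e : ℕ ↦ g (p ^ e)) (N : ℕ) :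
    ∑ q ∈ Icc 1 N, g q ≤ ∏ p ∈ (N + 1).primesBelow, ∑' e : ℕ, g (p ^ e) := by
  have hnorm : ∀ {p : ℕ}, p.Prime → Summable fun e : ℕ ↦ ‖g (p ^ e)‖ := fun hp ↦ by
    simpa only [Real.norm_of_nonneg (hg _)] using hsum hp
  have hEuler := hasSum_subtype_iff_indicator.mp
    (EulerProduct.summable_and_hasSum_smoothNumbers_prod_primesBelow_tsum h1 hmul hnorm (N + 1)).2
  calc ∑ q ∈ Icc 1 N, g q = ∑ q ∈ Icc 1 N, (N + 1).smoothNumbers.indicator g q := by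
        refine sum_congr rfl fun q hq ↦ (Set.indicator_of_mem ?_ g).symm
        rw [mem_Icc] at hq
        exact Nat.mem_smoothNumbers_of_lt (by omega) (by omega)
    _ ≤ _ := sum_le_hasSum _ (fun n _ ↦ Set.indicator_nonneg (fun n _ ↦ hg n) n) hEuler

theorem prod_primesBelow_le_exp_mul_tsum {a : ℕ → ℝ} {B s : ℝ} (hs : 1 < s) (hB : 0 ≤ B)
    (ha0 : ∀ p, p.Prime → 0 ≤ a p) (ha : ∀ p, p.Prime → a p ≤ 1 + B * (p : ℝ) ^ (-s))
    (N : ℕ) : ∏ p ∈ N.primesBelow, a p ≤ exp (B * ∑' n : ℕ, (n : ℝ) ^ (-s)) := by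
  calc ∏ p ∈ N.primesBelow, a p ≤ ∏ p ∈ N.primesBelow, exp (B * (p : ℝ) ^ (-s)) := by
        refine prod_le_prod (fun p hp ↦ ha0 p (Nat.prime_of_mem_primesBelow hp)) fun p hp ↦ ?_
        linarith [ha p (Nat.prime_of_mem_primesBelow hp), add_one_le_exp (B * (p : ℝ) ^ (-s))]
    _ = exp (B * ∑ p ∈ N.primesBelow, (p : ℝ) ^ (-s)) := by rw [← exp_sum, mul_sum]
    _ ≤ exp (B * ∑' n : ℕ, (n : ℝ) ^ (-s)) := by
        gcongr
        exact (summable_nat_rpow.mpr (by linarith)).sum_le_tsum _ fun n _ ↦ by positivity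

theorem sum_Icc_floor_le_rpow_mul_sum (f : ℕ → ℝ) {ε : ℝ} (hε : 0 ≤ ε) (Q : ℝ) :
    ∑ q ∈ Icc 1 ⌊Q⌋₊, f q ≤ Q ^ ε * ∑ q ∈ Icc 1 ⌊Q⌋₊, |f q| * (q : ℝ) ^ (-ε) := by
  rw [mul_sum]
  refine sum_le_sum fun q hq ↦ ?_
  rw [mem_Icc] at hq
  have hq0 : (0 : ℝ) < q := by exact_mod_cast hq.1
  have hqQ : (q : ℝ) ≤ Q :=
    (Nat.cast_le.mpr hq.2).trans (Nat.floor_le (zero_le_one.trans (Nat.floor_pos.mp (by omega))))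
  calc f q ≤ |f q| * (q : ℝ) ^ (-ε) * (q : ℝ) ^ ε := by
        rw [mul_assoc, ← rpow_add hq0, neg_add_cancel, rpow_zero, mul_one]
        exact le_abs_self _
    _ ≤ |f q| * (q : ℝ) ^ (-ε) * Q ^ ε := by gcongr
    _ = Q ^ ε * (|f q| * (q : ℝ) ^ (-ε)) := mul_comm _ _

theorem summable_and_tsum_le_of_abs_prime_pow_le {f : ℕ → ℝ} {A ε : ℝ} (hε : 0 < ε)
    (h1 : f 1 = 1) {p : ℕ} (hp : p.Prime) (hf : ∀ e ≠ 0, |f (p ^ e)| ≤ A / p) :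
    Summable (fun e : ℕ ↦ |f (p ^ e)| * ((p ^ e : ℕ) : ℝ) ^ (-ε)) ∧
      ∑' e : ℕ, |f (p ^ e)| * ((p ^ e : ℕ) : ℝ) ^ (-ε)
        ≤ 1 + A / (1 - 2 ^ (-ε)) * (p : ℝ) ^ (-(1 + ε)) := by
  set r : ℝ := 2 ^ (-ε)
  have hr1 : r < 1 := rpow_lt_one_of_one_lt_of_neg one_lt_two (by linarith)
  have hp2 : (2 : ℝ) ≤ p := by exact_mod_cast hp.two_le
  have hp0 : (0 : ℝ) < p := by linarith
  have hA : 0 ≤ A := by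
    have := (abs_nonneg _).trans (hf 1 one_ne_zero)
    simpa [hp0.ne'] using mul_nonneg this hp0.le
  have hterm (e : ℕ) : |f (p ^ (e + 1))| * ((p ^ (e + 1) : ℕ) : ℝ) ^ (-ε)
      ≤ A * (p : ℝ) ^ (-(1 + ε)) * r ^ e := by
    have hpow : ((p ^ (e + 1) : ℕ) : ℝ) ^ (-ε) = (p : ℝ) ^ (-ε) * ((p : ℝ) ^ (-ε)) ^ e := by
      rw [Nat.cast_pow, ← rpow_natCast_mul hp0.le, mul_comm, rpow_mul_natCast hp0.le, pow_succ']
    have hsplit : (p : ℝ) ^ (-(1 + ε)) = (p : ℝ)⁻¹ * (p : ℝ) ^ (-ε) := by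
      rw [neg_add, rpow_add hp0, rpow_neg_one]
    rw [hpow, hsplit]
    calc |f (p ^ (e + 1))| * ((p : ℝ) ^ (-ε) * ((p : ℝ) ^ (-ε)) ^ e)
        ≤ A / p * ((p : ℝ) ^ (-ε) * r ^ e) := by
          gcongr
          · exact hf _ e.succ_ne_zero
          · exact rpow_le_rpow_of_nonpos two_pos hp2 (by linarith)
      _ = A * ((p : ℝ)⁻¹ * (p : ℝ) ^ (-ε)) * r ^ e := by ring
  have hgeom :=
    (hasSum_geometric_of_lt_one (by positivity) hr1).mul_left (A * (p : ℝ) ^ (-(1 + ε)))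
  have hshift : Summable fun e : ℕ ↦ |f (p ^ (e + 1))| * ((p ^ (e + 1) : ℕ) : ℝ) ^ (-ε) :=
    hgeom.summable.of_nonneg_of_le (fun _ ↦ by positivity) hterm
  have hsum : Summable fun e : ℕ ↦ |f (p ^ e)| * ((p ^ e : ℕ) : ℝ) ^ (-ε) :=
    (summable_nat_add_iff 1).mp hshift
  refine ⟨hsum, ?_⟩
  rw [hsum.tsum_eq_zero_add, pow_zero, h1, abs_one, Nat.cast_one, one_rpow, one_mul]
  calc 1 + _ ≤ 1 + A * (p : ℝ) ^ (-(1 + ε)) * (1 - r)⁻¹ := by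
        linarith [hshift.tsum_le_tsum hterm hgeom.summable, hgeom.tsum_eq]
    _ = 1 + A / (1 - r) * (p : ℝ) ^ (-(1 + ε)) := by ring

theorem exists_sum_Icc_le_mul_rpow {f : ℕ → ℝ} {A : ℝ} (h1 : f 1 = 1)
    (hmul : ∀ {m n : ℕ}, m.Coprime n → f (m * n) = f m * f n)
    (hf : ∀ p e : ℕ, p.Prime → e ≠ 0 → |f (p ^ e)| ≤ A / p) {ε : ℝ} (hε : 0 < ε) :
    ∃ C : ℝ, 0 < C ∧ ∀ Q : ℝ, 1 ≤ Q → ∑ q ∈ Icc 1 ⌊Q⌋₊, f q ≤ C * Q ^ ε := by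
  set g : ℕ → ℝ := fun q ↦ |f q| * (q : ℝ) ^ (-ε)
  have hlocal (p : ℕ) (hp : p.Prime) :=
    summable_and_tsum_le_of_abs_prime_pow_le hε h1 hp fun e he ↦ hf p e hp he
  have hA : 0 ≤ A := by
    have := (abs_nonneg _).trans (hf 2 1 Nat.prime_two one_ne_zero)
    linarith
  have hgmul {m n : ℕ} (h : m.Coprime n) : g (m * n) = g m * g n := by
    simp only [g, hmul h, abs_mul, Nat.cast_mul, mul_rpow m.cast_nonneg n.cast_nonneg]
    ring
  refine ⟨exp (A / (1 - 2 ^ (-ε)) * ∑' n : ℕ, (n : ℝ) ^ (-(1 + ε))), exp_pos _,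
    fun Q hQ ↦ ?_⟩
  have hr1 : (2 : ℝ) ^ (-ε) < 1 := rpow_lt_one_of_one_lt_of_neg one_lt_two (by linarith)
  calc ∑ q ∈ Icc 1 ⌊Q⌋₊, f q ≤ Q ^ ε * ∑ q ∈ Icc 1 ⌊Q⌋₊, g q :=
        sum_Icc_floor_le_rpow_mul_sum f hε.le Q
    _ ≤ Q ^ ε * ∏ p ∈ (⌊Q⌋₊ + 1).primesBelow, ∑' e : ℕ, g (p ^ e) := by
        gcongr
        exact sum_Icc_le_prod_primesBelow_tsum (fun n ↦ by positivity) (by simp [g, h1]) hgmul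
          (fun hp ↦ (hlocal _ hp).1) _
    _ ≤ Q ^ ε * exp (A / (1 - 2 ^ (-ε)) * ∑' n : ℕ, (n : ℝ) ^ (-(1 + ε))) := by
        gcongr
        exact prod_primesBelow_le_exp_mul_tsum (by linarith) (div_nonneg hA (by linarith))
          (fun p _ ↦ tsum_nonneg fun e ↦ by positivity) (fun p hp ↦ (hlocal p hp).2) _
    _ = _ := mul_comm _ _

theorem mul_pow_succ_mul_div (a b x : ℝ) (ha : a ≠ 0) (k : ℕ) :
    a * (x * (b / a)) ^ (k + 1) = (b / a) ^ k * (x ^ (k + 1) * b) := by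
  linear_combination x ^ (k + 1) * (b / a) ^ k * mul_div_cancel₀ b ha

theorem prime_pow_le_two_mul_totient {p e : ℕ} (hp : p.Prime) (he : e ≠ 0) :
    p ^ e ≤ 2 * (p ^ e).totient := by
  rw [Nat.totient_prime_pow hp (Nat.pos_of_ne_zero he)]
  obtain ⟨e, rfl⟩ := Nat.exists_eq_succ_of_ne_zero he
  have := hp.two_le
  rw [Nat.succ_sub_one, pow_succ, mul_left_comm]
  exact Nat.mul_le_mul_left _ (by omega)

theorem totient_mul_pow_mul_div_totient_mul_of_coprime {κ : ℕ → ℝ}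
    (hκmul : ∀ m n : ℕ, m.Coprime n → κ (m * n) = κ m * κ n) (j : ℕ) {m n : ℕ}
    (h : m.Coprime n) :
    ((m * n).totient : ℝ) * (κ (m * n) * (((m * n : ℕ) : ℝ) / (m * n).totient)) ^ j =
      (m.totient * (κ m * (m / m.totient)) ^ j) * (n.totient * (κ n * (n / n.totient)) ^ j) := by
  rw [Nat.totient_mul h, hκmul m n h]
  push_cast
  rw [mul_div_mul_comm]
  ring

section Kappa

variable {k : ℕ} {κ : ℕ → ℝ}
  (hκA : ∀ p : ℕ, p.Prime → ∀ u : ℕ,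
    κ (p ^ (u * k + 1)) = (k : ℝ) * (p : ℝ) ^ (-(u : ℝ) - 1/2))
  (hκB : ∀ p : ℕ, p.Prime → ∀ u v : ℕ, 2 ≤ v → v ≤ k →
    κ (p ^ (u * k + v)) = (p : ℝ) ^ (-(u : ℝ) - 1))
include hκA hκB

/- For `e = u k + 1` the exponent of `p` is `1/2 - u - k/2`, for `e = u k + v` with `2 ≤ v ≤ k` it
is `v - u - k - 1`; both are at most `-1` once `k ≥ 3`. -/
theorem kappa_prime_pow_nonneg_and_pow_succ_mul_le (hk : 3 ≤ k) {p e : ℕ} (hp : p.Prime)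
    (he : e ≠ 0) :
    0 ≤ κ (p ^ e) ∧ κ (p ^ e) ^ (k + 1) * p ^ e ≤ k ^ (k + 1) / p := by
  obtain ⟨u, v, hv1, hvk, rfl⟩ : ∃ u v, 1 ≤ v ∧ v ≤ k ∧ e = u * k + v :=
    ⟨(e - 1) / k, (e - 1) % k + 1, by omega,
      by have := Nat.mod_lt (e - 1) (by omega : 0 < k); omega,
      by have := Nat.div_add_mod (e - 1) k; rw [mul_comm]; omega⟩
  have hp0 : (0 : ℝ) < p := by exact_mod_cast hp.pos
  have hp1 : (1 : ℝ) ≤ p := by exact_mod_cast hp.one_le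
  have hk3 : (3 : ℝ) ≤ k := by exact_mod_cast hk
  have hpinv : (k : ℝ) ^ (k + 1) / p = k ^ (k + 1) * (p : ℝ) ^ (-1 : ℝ) := by
    rw [rpow_neg_one, div_eq_mul_inv]
  rw [hpinv, ← rpow_natCast (p : ℝ) (u * k + v)]
  rcases hv1.eq_or_lt with rfl | hv2
  · rw [hκA p hp u]
    refine ⟨by positivity, ?_⟩
    calc ((k : ℝ) * (p : ℝ) ^ (-(u : ℝ) - 1/2)) ^ (k + 1) * (p : ℝ) ^ ((u * k + 1 : ℕ) : ℝ)
        = k ^ (k + 1) * (p : ℝ) ^ ((-(u : ℝ) - 1/2) * (k + 1 : ℕ) + (u * k + 1 : ℕ)) := by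
          rw [mul_pow, ← rpow_mul_natCast hp0.le, mul_assoc, ← rpow_add hp0]
      _ ≤ k ^ (k + 1) * (p : ℝ) ^ (-1 : ℝ) := by
          gcongr
          push_cast
          nlinarith
  · rw [hκB p hp u v hv2 hvk]
    refine ⟨by positivity, ?_⟩
    have hvk' : (v : ℝ) ≤ k := by exact_mod_cast hvk
    calc ((p : ℝ) ^ (-(u : ℝ) - 1)) ^ (k + 1) * (p : ℝ) ^ ((u * k + v : ℕ) : ℝ)
        = (p : ℝ) ^ ((-(u : ℝ) - 1) * (k + 1 : ℕ) + (u * k + v : ℕ)) := by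
          rw [← rpow_mul_natCast hp0.le, ← rpow_add hp0]
      _ ≤ (p : ℝ) ^ (-1 : ℝ) := by
          gcongr
          push_cast
          nlinarith
      _ ≤ k ^ (k + 1) * (p : ℝ) ^ (-1 : ℝ) :=
          le_mul_of_one_le_left (by positivity) (one_le_pow₀ (by linarith))

theorem abs_totient_mul_pow_succ_prime_pow_le (hk : 3 ≤ k) {p e : ℕ} (hp : p.Prime)
    (he : e ≠ 0) :
    |((p ^ e).totient : ℝ) * (κ (p ^ e) * (((p ^ e : ℕ) : ℝ) / (p ^ e).totient)) ^ (k + 1)|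
      ≤ 2 ^ k * k ^ (k + 1) / p := by
  obtain ⟨hκ0, hκle⟩ := kappa_prime_pow_nonneg_and_pow_succ_mul_le hκA hκB hk hp he
  have hφ : (0 : ℝ) < (p ^ e).totient := by
    exact_mod_cast Nat.totient_pos.mpr (pow_pos hp.pos e)
  have hψ : ((p ^ e : ℕ) : ℝ) / (p ^ e).totient ≤ 2 := by
    rw [div_le_iff₀ hφ]
    exact_mod_cast prime_pow_le_two_mul_totient hp he
  rw [mul_pow_succ_mul_div _ _ _ hφ.ne', abs_of_nonneg (by positivity), mul_div_assoc]
  rw [Nat.cast_pow] at hψ ⊢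
  gcongr

end Kappa

theorem stmt19 (k : ℕ) (hk : 4 ≤ k) (κ : ℕ → ℝ)
    (hκ1 : κ 1 = 1)
    (hκmul : ∀ m n : ℕ, Nat.Coprime m n → κ (m * n) = κ m * κ n)
    (hκA : ∀ p : ℕ, p.Prime → ∀ u : ℕ,
      κ (p ^ (u * k + 1)) = (k : ℝ) * (p : ℝ) ^ (-(u : ℝ) - 1/2))
    (hκB : ∀ p : ℕ, p.Prime → ∀ u v : ℕ, 2 ≤ v → v ≤ k →
      κ (p ^ (u * k + v)) = (p : ℝ) ^ (-(u : ℝ) - 1))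
    (ε : ℝ) (hε : 0 < ε) :
    ∃ C : ℝ, 0 < C ∧ ∀ Q : ℝ, 1 ≤ Q →
      ∑ q ∈ Finset.Icc 1 ⌊Q⌋₊,
        (Nat.totient q : ℝ) * (κ q * ((q : ℝ) / (Nat.totient q : ℝ))) ^ (k + 1)
      ≤ C * Q ^ ε :=
  exists_sum_Icc_le_mul_rpow (by simp [hκ1])
    (totient_mul_pow_mul_div_totient_mul_of_coprime hκmul (k + 1))
    (fun _ _ hp he ↦ abs_totient_mul_pow_succ_prime_pow_le hκA hκB (by omega) hp he) hε
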